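/- Let a, b, c, x, y, χ be complex numbers with b and c not nonpositive integers and |χ| < 1. Then the reduction formula Ψ₂(a;b,c;x,y,χ) = (1−χ)^{−a} Ψ₂(a;b,c; x/(1−χ), y/(1−χ)) holds, where Ψ₂(a;b,c;x,y,z) denotes the three-variable series Σ_{ℓ,m,n=0}^∞ (a)_{ℓ+m+n} x^m y^n z^ℓ / (ℓ! m! n! (b)_m (c)_n), and (1−χ)^{−a} = exp(−a·Log(1−χ)) is taken with the principal branch of the logarithm. -/

import Mathlib

open Complex

/-- Pochhammer symbol `(q)_n = q (q+1) ⋯ (q+n-1)`. -/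
noncomputable def poch (q : ℂ) (n : ℕ) : ℂ := (ascPochhammer ℂ n).eval q

/-- Confluent hypergeometric function `₁F₁(a; b; x) = ∑ₛ (a)ₛ xˢ / (s! (b)ₛ)`. -/
noncomputable def oneF1 (a b x : ℂ) : ℂ :=
  ∑' s : ℕ, poch a s * x ^ s / ((s.factorial : ℂ) * poch b s)

/-- Humbert function `Ψ₂(a; b, c; x, y) = ∑ₘ,ₙ (a)ₘ₊ₙ xᵐ yⁿ / (m! n! (b)ₘ (c)ₙ)`. -/
noncomputable def psi2 (a b c x y : ℂ) : ℂ :=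
  ∑' p : ℕ × ℕ, poch a (p.1 + p.2) * x ^ p.1 * y ^ p.2 /
    ((p.1.factorial : ℂ) * (p.2.factorial : ℂ) * poch b p.1 * poch c p.2)

/-- Three-variable extension
`Ψ₂(a; b, c; x, y, z) = ∑_{ℓ,m,n} (a)_{ℓ+m+n} xᵐ yⁿ zˡ / (ℓ! m! n! (b)ₘ (c)ₙ)`. -/
noncomputable def psi2three (a b c x y z : ℂ) : ℂ :=
  ∑' p : ℕ × ℕ × ℕ, poch a (p.1 + p.2.1 + p.2.2) * x ^ p.2.1 * y ^ p.2.2 * z ^ p.1 /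
    ((p.1.factorial : ℂ) * (p.2.1.factorial : ℂ) * (p.2.2.factorial : ℂ) *
      poch b p.2.1 * poch c p.2.2)

noncomputable def Complex.abs : AbsoluteValue ℂ ℝ where
  toFun z := ‖z‖
  map_mul' := norm_mul
  nonneg' := norm_nonneg
  eq_zero' _ := norm_eq_zero
  add_le' := norm_add_le

@[simp] lemma Complex.abs_apply' (z : ℂ) : Complex.abs z = ‖z‖ := rfl
lemma Complex.norm_eq_abs (z : ℂ) : ‖z‖ = Complex.abs z := rfl
lemma Complex.abs_natCast (n : ℕ) : Complex.abs (n : ℂ) = n := Complex.norm_natCast n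
lemma Complex.abs_ofReal (t : ℝ) : Complex.abs (t : ℂ) = |t| := Complex.norm_real t
lemma Complex.abs_re_le_abs (z : ℂ) : |z.re| ≤ Complex.abs z := Complex.abs_re_le_norm z

noncomputable def pochR (q : ℝ) (n : ℕ) : ℝ := (ascPochhammer ℝ n).eval q

lemma poch_zero (q : ℂ) : poch q 0 = 1 := by simp [poch]
lemma pochR_zero (q : ℝ) : pochR q 0 = 1 := by simp [pochR]
lemma poch_succ (q : ℂ) (n : ℕ) : poch q (n+1) = poch q n * (q + n) :=
  ascPochhammer_succ_eval n q
lemma pochR_succ (q : ℝ) (n : ℕ) : pochR q (n+1) = pochR q n * (q + n) :=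
  ascPochhammer_succ_eval n q

lemma poch_add (q : ℂ) (j k : ℕ) : poch q (j + k) = poch q j * poch (q + j) k := by
  have h := congrArg (Polynomial.eval q) (ascPochhammer_mul (S := ℂ) j k)
  simpa [poch, Polynomial.eval_comp] using h.symm

lemma pochR_nonneg {q : ℝ} (hq : 0 ≤ q) (n : ℕ) : 0 ≤ pochR q n := by
  induction n with
  | zero => simp [pochR_zero]
  | succ n ih => rw [pochR_succ]; positivity

lemma abs_poch_le (a : ℂ) (n : ℕ) : Complex.abs (poch a n) ≤ pochR (Complex.abs a) n := by
  induction n with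
  | zero => simp [poch_zero, pochR_zero]
  | succ n ih =>
    rw [poch_succ, pochR_succ, map_mul]
    have h1 : Complex.abs (a + n) ≤ Complex.abs a + n := by
      simpa using Complex.abs.add_le a n
    have := Complex.abs.nonneg (poch a n)
    exact mul_le_mul ih h1 (Complex.abs.nonneg _)
      (pochR_nonneg (Complex.abs.nonneg a) n)

lemma pochR_mono {q q' : ℝ} (hq : 0 ≤ q) (h : q ≤ q') (n : ℕ) : pochR q n ≤ pochR q' n := by
  induction n with
  | zero => simp [pochR_zero]
  | succ n ih =>
    rw [pochR_succ, pochR_succ]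
    exact mul_le_mul ih (by linarith) (by positivity) (pochR_nonneg (by linarith) n)

lemma pochR_le {A : ℝ} (hA : 0 ≤ A) (k : ℕ) : pochR A k ≤ (A+1)^k * k.factorial := by
  induction k with
  | zero => simp [pochR_zero]
  | succ k ih =>
    rw [pochR_succ, pow_succ, Nat.factorial_succ]
    have h1 : A + k ≤ (A+1) * (k+1) := by nlinarith
    calc pochR A k * (A + k) ≤ ((A+1)^k * k.factorial) * ((A+1)*(k+1)) := by
          apply mul_le_mul ih h1 (by positivity) (by positivity)
      _ = (A+1)^k * (A+1) * ((k+1) * k.factorial) := by ring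
      _ = (A+1)^k * (A+1) * ((k+1:ℕ) * k.factorial : ℕ) := by push_cast; ring
open Complex

lemma abs_add_nat_lower {b : ℂ} (hb : ∀ n : ℕ, b ≠ -(n : ℂ)) :
    ∃ δ : ℝ, 0 < δ ∧ ∀ j : ℕ, δ * (j + 1) ≤ Complex.abs (b + j) := by
  set N : ℕ := ⌈2 * Complex.abs b⌉₊ + 1 with hN
  have hpos : ∀ j : ℕ, 0 < Complex.abs (b + j) := by
    intro j
    rw [AbsoluteValue.pos_iff]
    intro h
    exact hb j (by linear_combination h)
  -- min over j < N of |b+j|/(j+1)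
  have hne : (Finset.range N).Nonempty := ⟨0, by simp [hN]⟩
  set δ0 : ℝ := (Finset.range N).inf' hne (fun j => Complex.abs (b + j) / (j + 1)) with hδ0
  refine ⟨min δ0 (1/2), lt_min ?_ one_half_pos, ?_⟩
  · rw [hδ0]
    apply (Finset.lt_inf'_iff hne).2
    intro j _
    exact div_pos (hpos j) (by positivity)
  · intro j
    by_cases hj : j < N
    · have h1 : δ0 ≤ Complex.abs (b + j) / (j + 1) :=
        Finset.inf'_le _ (Finset.mem_range.2 hj)
      have h2 : min δ0 (1/2) * (j+1) ≤ (Complex.abs (b + j) / (j + 1)) * (j+1) := by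
        apply mul_le_mul_of_nonneg_right ((min_le_left _ _).trans h1) (by positivity)
      rwa [div_mul_cancel₀ _ (by positivity : (j:ℝ)+1 ≠ 0)] at h2
    · push_neg at hj
      have hj2 : 2 * Complex.abs b ≤ (j : ℝ) - 1 + 0 := by
        have : (⌈2 * Complex.abs b⌉₊ : ℝ) ≤ (j:ℝ) - 1 := by
          have : (N : ℝ) ≤ j := by exact_mod_cast hj
          rw [hN] at this; push_cast at this; linarith
        linarith [Nat.le_ceil (2 * Complex.abs b)]
      have habs : ((j:ℝ) + 1) / 2 ≤ Complex.abs (b + j) := by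
        have h3 : (j : ℝ) - Complex.abs b ≤ Complex.abs (b + j) := by
          have h4 := Complex.abs.add_le (b + j) (-b)
          have h5 : b + (j:ℂ) + -b = (j:ℂ) := by ring
          rw [h5, Complex.abs.map_neg] at h4
          simp only [Complex.abs_natCast] at h4
          linarith
        linarith
      calc min δ0 (1/2) * (j+1) ≤ (1/2) * (j+1) := by
            apply mul_le_mul_of_nonneg_right (min_le_right _ _) (by positivity)
        _ ≤ Complex.abs (b + j) := by linarith

lemma abs_poch_lower {b : ℂ} (hb : ∀ n : ℕ, b ≠ -(n : ℂ)) :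
    ∃ δ : ℝ, 0 < δ ∧ ∀ m : ℕ, δ ^ m * m.factorial ≤ Complex.abs (poch b m) := by
  obtain ⟨δ, hδ, h⟩ := abs_add_nat_lower hb
  refine ⟨δ, hδ, ?_⟩
  intro m
  induction m with
  | zero => simp [poch_zero]
  | succ m ih =>
    rw [poch_succ, map_mul, pow_succ, Nat.factorial_succ]
    calc δ ^ m * δ * ((m+1 : ℕ) * m.factorial : ℕ)
        = (δ ^ m * m.factorial) * (δ * (m+1)) := by push_cast; ring
      _ ≤ Complex.abs (poch b m) * Complex.abs (b + m) := by
          apply mul_le_mul ih (h m) (by positivity) (Complex.abs.nonneg _)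

lemma poch_ne_zero {b : ℂ} (hb : ∀ n : ℕ, b ≠ -(n : ℂ)) (m : ℕ) : poch b m ≠ 0 := by
  obtain ⟨δ, hδ, h⟩ := abs_poch_lower hb
  intro h0
  have := h m
  rw [h0, map_zero] at this
  have hf : (0:ℝ) < δ ^ m * m.factorial := by positivity
  linarith
lemma summable_pochR (A : ℝ) (hA : 0 ≤ A) {r : ℝ} (hr0 : 0 ≤ r) (hr : r < 1) (s : ℕ) :
    Summable (fun ℓ : ℕ => pochR A (ℓ + s) * r ^ ℓ / (ℓ.factorial : ℝ)) := by
  set r' : ℝ := (1 + r) / 2 with hr'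
  have hrr' : r < r' := by rw [hr']; linarith
  have hr'1 : r' < 1 := by rw [hr']; linarith
  have hr'0 : 0 < r' - r := by linarith
  apply summable_of_ratio_norm_eventually_le hr'1
  filter_upwards [Filter.eventually_ge_atTop ⌈(A + s) * r / (r' - r)⌉₊] with ℓ hℓ
  have hℓ' : (A + s) * r / (r' - r) ≤ (ℓ : ℝ) :=
    (Nat.le_ceil _).trans (by exact_mod_cast hℓ)
  have hkey : (A + (ℓ + s)) * r ≤ r' * (ℓ + 1) := by
    have h1 : (A + s) * r ≤ (r' - r) * ℓ := by
      rw [div_le_iff₀ hr'0] at hℓ'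
      linarith [mul_comm ((r':ℝ) - r) (ℓ:ℝ)]
    nlinarith
  have hnn : 0 ≤ pochR A (ℓ + s) * r ^ ℓ / (ℓ.factorial : ℝ) := by
    have := pochR_nonneg hA (ℓ + s); positivity
  have hnn' : 0 ≤ pochR A (ℓ + 1 + s) * r ^ (ℓ+1) / ((ℓ+1).factorial : ℝ) := by
    have := pochR_nonneg hA (ℓ + 1 + s); positivity
  rw [Real.norm_eq_abs, Real.norm_eq_abs, _root_.abs_of_nonneg hnn', _root_.abs_of_nonneg hnn]
  have hfac : ((ℓ+1).factorial : ℝ) = (ℓ+1) * (ℓ.factorial : ℝ) := by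
    rw [Nat.factorial_succ]; push_cast; ring
  have hps : pochR A (ℓ + 1 + s) = pochR A (ℓ + s) * (A + (ℓ + s)) := by
    have : ℓ + 1 + s = (ℓ + s) + 1 := by omega
    rw [this, pochR_succ]; push_cast; ring_nf
  rw [hps, hfac, pow_succ]
  have hℓ1 : (0:ℝ) < ℓ + 1 := by positivity
  rw [div_le_iff₀ (by positivity)]
  have expand : r' * (pochR A (ℓ + s) * r ^ ℓ / (ℓ.factorial:ℝ)) * (((ℓ:ℝ) + 1) * (ℓ.factorial:ℝ))
      = (pochR A (ℓ + s) * r ^ ℓ) * (r' * ((ℓ:ℝ) + 1)) := by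
    have hfl : ((ℓ.factorial : ℝ)) ≠ 0 := by positivity
    field_simp
  rw [expand]
  have hp := pochR_nonneg hA (ℓ + s)
  calc pochR A (ℓ + s) * (A + ((ℓ:ℝ) + s)) * (r ^ ℓ * r)
      = (pochR A (ℓ + s) * r ^ ℓ) * ((A + ((ℓ:ℝ) + s)) * r) := by ring
    _ ≤ (pochR A (ℓ + s) * r ^ ℓ) * (r' * ((ℓ:ℝ) + 1)) :=
        mul_le_mul_of_nonneg_left hkey (by positivity)
lemma norm_c_le (α : ℂ) (n : ℕ) :
    ‖poch α n / (n.factorial : ℂ)‖ ≤ pochR (Complex.abs α) n / (n.factorial : ℝ) := by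
  rw [norm_div, Complex.norm_natCast, Complex.norm_eq_abs]
  gcongr
  exact abs_poch_le α n

lemma summable_u (A : ℝ) (hA : 0 ≤ A) {R : ℝ} (hR0 : 0 ≤ R) (hR : R < 1) :
    Summable (fun n : ℕ => pochR A n * n * R ^ (n-1) / (n.factorial : ℝ)) := by
  rw [← summable_nat_add_iff 1]
  have heq : (fun n : ℕ => pochR A (n+1) * ((n+1 : ℕ) : ℝ) * R ^ (n+1-1) / (((n+1 : ℕ)).factorial : ℝ))
      = fun n : ℕ => pochR A (n + 1) * R ^ n / (n.factorial : ℝ) := by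
    funext n
    rw [Nat.add_sub_cancel, Nat.factorial_succ]
    push_cast
    have h1 : ((n:ℝ) + 1) ≠ 0 := by positivity
    have h2 : ((n.factorial : ℝ)) ≠ 0 := by positivity
    field_simp
  exact heq ▸ summable_pochR A hA hR0 hR 1
lemma norm_term_le (α : ℂ) (z : ℂ) (n : ℕ) :
    ‖poch α n / (n.factorial : ℂ) * z ^ n‖ ≤
      pochR (Complex.abs α) n * (Complex.abs z) ^ n / (n.factorial : ℝ) := by
  rw [norm_mul, norm_pow, Complex.norm_eq_abs z]
  calc ‖poch α n / (n.factorial : ℂ)‖ * Complex.abs z ^ n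
      ≤ (pochR (Complex.abs α) n / (n.factorial : ℝ)) * Complex.abs z ^ n := by
        apply mul_le_mul_of_nonneg_right (norm_c_le α n) (by positivity)
    _ = pochR (Complex.abs α) n * (Complex.abs z) ^ n / (n.factorial : ℝ) := by ring

lemma summable_poch_term (α : ℂ) {z : ℂ} (hz : Complex.abs z < 1) :
    Summable (fun n : ℕ => poch α n / (n.factorial : ℂ) * z ^ n) := by
  apply Summable.of_norm
  apply Summable.of_nonneg_of_le (fun n => norm_nonneg _) (fun n => norm_term_le α z n)
  have := summable_pochR (Complex.abs α) (Complex.abs.nonneg α) (Complex.abs.nonneg z) hz 0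
  simpa using this

lemma norm_dterm_le (α : ℂ) {R : ℝ} (hR : 0 ≤ R) {y : ℂ} (hy : Complex.abs y ≤ R) (n : ℕ) :
    ‖poch α n / (n.factorial : ℂ) * (n * y ^ (n-1))‖ ≤
      pochR (Complex.abs α) n * n * R ^ (n-1) / (n.factorial : ℝ) := by
  rw [norm_mul, norm_mul, norm_pow, Complex.norm_natCast, Complex.norm_eq_abs y]
  calc ‖poch α n / (n.factorial : ℂ)‖ * ((n : ℝ) * Complex.abs y ^ (n-1))
      ≤ (pochR (Complex.abs α) n / (n.factorial : ℝ)) * ((n:ℝ) * R ^ (n-1)) := by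
        apply mul_le_mul (norm_c_le α n)
        · apply mul_le_mul_of_nonneg_left (pow_le_pow_left₀ (Complex.abs.nonneg y) hy _)
            (by positivity)
        · positivity
        · exact div_nonneg (pochR_nonneg (Complex.abs.nonneg α) n) (by positivity)
    _ = pochR (Complex.abs α) n * n * R ^ (n-1) / (n.factorial : ℝ) := by ring

lemma summable_dterm (α : ℂ) {z : ℂ} (hz : Complex.abs z < 1) :
    Summable (fun n : ℕ => poch α n / (n.factorial : ℂ) * (n * z ^ (n-1))) := by
  apply Summable.of_norm
  apply Summable.of_nonneg_of_le (fun n => norm_nonneg _)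
    (fun n => norm_dterm_le α (Complex.abs.nonneg z) le_rfl n)
  exact summable_u (Complex.abs α) (Complex.abs.nonneg α) (Complex.abs.nonneg z) hz

lemma hasDerivAt_g (α : ℂ) {z : ℂ} (hz : Complex.abs z < 1) :
    HasDerivAt (fun w : ℂ => ∑' n : ℕ, poch α n / (n.factorial : ℂ) * w ^ n)
      (∑' n : ℕ, poch α n / (n.factorial : ℂ) * (n * z ^ (n-1))) z := by
  set A := Complex.abs α with hA
  set R : ℝ := (Complex.abs z + 1) / 2 with hRdef
  have hR0 : 0 < R := by have := Complex.abs.nonneg z; rw [hRdef]; linarith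
  have hR1 : R < 1 := by rw [hRdef]; linarith
  have hzR : Complex.abs z < R := by rw [hRdef]; linarith
  refine hasDerivAt_tsum_of_isPreconnected
    (u := fun n : ℕ => pochR A n * n * R ^ (n-1) / (n.factorial : ℝ))
    (summable_u A (Complex.abs.nonneg α) hR0.le hR1)
    Metric.isOpen_ball (convex_ball (0:ℂ) R).isPreconnected
    (g := fun n w => poch α n / (n.factorial : ℂ) * w ^ n)
    (g' := fun n w => poch α n / (n.factorial : ℂ) * ((n : ℂ) * w ^ (n-1))) (y₀ := 0)
    (fun n y _ => (hasDerivAt_pow n y).const_mul _)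
    (fun n y hy => ?_) ?_ ?_ ?_
  · rw [Metric.mem_ball, dist_zero_right, Complex.norm_eq_abs] at hy
    exact norm_dterm_le α hR0.le hy.le n
  · rw [Metric.mem_ball, dist_zero_right, norm_zero]; exact hR0
  · exact summable_poch_term α (by simp : Complex.abs (0:ℂ) < 1)
  · rw [Metric.mem_ball, dist_zero_right, Complex.norm_eq_abs]; exact hzR
lemma ode_identity (α : ℂ) {z : ℂ} (hz : Complex.abs z < 1) :
    α * (∑' n : ℕ, poch α n / (n.factorial : ℂ) * z ^ n) =
      (1 - z) * (∑' n : ℕ, poch α n / (n.factorial : ℂ) * ((n : ℂ) * z ^ (n-1))) := by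
  set c : ℕ → ℂ := fun n => poch α n / (n.factorial : ℂ) with hc
  have hG : HasSum (fun n => c n * z ^ n) (∑' n, c n * z ^ n) :=
    (summable_poch_term α hz).hasSum
  have hD : HasSum (fun n => c n * ((n:ℂ) * z ^ (n-1))) (∑' n, c n * ((n:ℂ) * z ^ (n-1))) :=
    (summable_dterm α hz).hasSum
  set D : ℂ := ∑' n, c n * ((n:ℂ) * z ^ (n-1)) with hDdef
  set G : ℂ := ∑' n, c n * z ^ n with hGdef
  have h1 : HasSum (fun k : ℕ => c (k+1) * (((k:ℂ)+1) * z ^ k)) D := by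
    have h0 : HasSum (fun n => c n * ((n:ℂ) * z ^ (n-1)))
        (D + ∑ i ∈ Finset.range 1, c i * ((i:ℂ) * z ^ (i-1))) := by simpa using hD
    have h0' := (hasSum_nat_add_iff (f := fun n => c n * ((n:ℂ) * z ^ (n-1))) 1).2 h0
    have heq : (fun n : ℕ => c (n+1) * (((n+1 : ℕ):ℂ) * z ^ (n+1-1)))
        = fun k : ℕ => c (k+1) * (((k:ℂ)+1) * z ^ k) := by
      funext k; push_cast [Nat.add_sub_cancel]; ring
    rwa [heq] at h0'
  have h3 : HasSum (fun k : ℕ => ((k+1 : ℕ):ℂ) * c (k+1) * z ^ (k+1)) (D * z) := by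
    have heq : (fun k : ℕ => ((k+1 : ℕ):ℂ) * c (k+1) * z ^ (k+1))
        = fun k => c (k+1) * (((k:ℂ)+1) * z ^ k) * z := by
      funext k; push_cast; ring
    rw [heq]; exact h1.mul_right z
  have h4 : HasSum (fun k : ℕ => (k:ℂ) * c k * z ^ k) (D * z) := by
    have h0' := (hasSum_nat_add_iff (f := fun k : ℕ => (k:ℂ) * c k * z ^ k) 1).1 h3
    simpa using h0'
  have h5 := h1.sub h4
  have key : ∀ k : ℕ, c (k+1) * (((k:ℂ)+1) * z ^ k) - (k:ℂ) * c k * z ^ k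
      = α * (c k * z ^ k) := by
    intro k
    have hkey : c (k+1) * ((k:ℂ)+1) = c k * (α + k) := by
      rw [hc]
      simp only
      rw [poch_succ, Nat.factorial_succ]
      have h1' : ((k:ℂ)+1) ≠ 0 := Nat.cast_add_one_ne_zero k
      have h2' : ((k.factorial : ℂ)) ≠ 0 := Nat.cast_ne_zero.2 k.factorial_ne_zero
      push_cast
      field_simp
    linear_combination z ^ k * hkey
  have h6 : HasSum (fun k : ℕ => α * (c k * z ^ k)) (D - D * z) := by
    have heq : (fun k : ℕ => c (k+1) * (((k:ℂ)+1) * z ^ k) - (k:ℂ) * c k * z ^ k)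
        = fun k => α * (c k * z ^ k) := funext key
    rwa [heq] at h5
  have h7 : HasSum (fun k : ℕ => α * (c k * z ^ k)) (α * G) := hG.mul_left α
  have := h7.unique h6
  rw [this]; ring

lemma hasSum_binom (α : ℂ) {z : ℂ} (hz : Complex.abs z < 1) :
    HasSum (fun n : ℕ => poch α n * z ^ n / (n.factorial : ℂ)) ((1 - z) ^ (-α)) := by
  set c : ℕ → ℂ := fun n => poch α n / (n.factorial : ℂ) with hc
  set g : ℂ → ℂ := fun w => ∑' n : ℕ, c n * w ^ n with hg
  have hfeq : (fun n : ℕ => poch α n * z ^ n / (n.factorial : ℂ)) = fun n => c n * z ^ n := by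
    funext n; rw [hc]; ring
  rw [hfeq]
  have hsum : Summable (fun n : ℕ => c n * z ^ n) := summable_poch_term α hz
  rw [hsum.hasSum_iff]
  -- the function F on ℝ
  set e : ℂ → ℂ := fun w => g (w * z) * (1 - w * z) ^ α with he
  have hF : ∀ t : ℝ, t ∈ Set.Icc (0:ℝ) 1 → HasDerivAt (fun s : ℝ => e s) 0 t := by
    intro t ht
    obtain ⟨ht0, ht1⟩ := ht
    have habs : Complex.abs ((t:ℂ) * z) < 1 := by
      rw [map_mul, Complex.abs_ofReal, _root_.abs_of_nonneg ht0]
      calc t * Complex.abs z ≤ 1 * Complex.abs z := by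
            apply mul_le_mul_of_nonneg_right ht1 (Complex.abs.nonneg z)
        _ < 1 := by rwa [one_mul]
    have hre : ((1:ℂ) - (t:ℂ) * z).re > 0 := by
      have h1 : ((t:ℂ) * z).re = t * z.re := by simp [Complex.mul_re]
      have h2 : t * z.re ≤ t * Complex.abs z := by
        apply mul_le_mul_of_nonneg_left ((Complex.abs_re_le_abs z).trans' (le_abs_self _)) ht0
      have h3 : t * Complex.abs z < 1 := by
        nlinarith [Complex.abs.nonneg z]
      simp only [Complex.sub_re, Complex.one_re, h1]
      linarith
    have hslit : ((1:ℂ) - (t:ℂ) * z) ∈ Complex.slitPlane := Or.inl hre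
    have hne : ((1:ℂ) - (t:ℂ) * z) ≠ 0 := Complex.slitPlane_ne_zero hslit
    -- complex derivative of e at (t:ℂ)
    have hmul : HasDerivAt (fun w : ℂ => w * z) z (t:ℂ) := by
      simpa using (hasDerivAt_id (t:ℂ)).mul_const z
    have hgd : HasDerivAt g (∑' n : ℕ, c n * ((n:ℂ) * ((t:ℂ)*z) ^ (n-1))) ((t:ℂ)*z) :=
      hasDerivAt_g α habs
    have hgc : HasDerivAt (fun w : ℂ => g (w * z))
        ((∑' n : ℕ, c n * ((n:ℂ) * ((t:ℂ)*z) ^ (n-1))) * z) (t:ℂ) := by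
      have := HasDerivAt.comp (𝕜 := ℂ) (t:ℂ) hgd hmul
      exact this
    have hψ : HasDerivAt (fun w : ℂ => 1 - w * z) (-z) (t:ℂ) := by
      simpa using hmul.const_sub 1
    have hcp : HasDerivAt (fun w : ℂ => (1 - w * z) ^ α)
        (α * ((1:ℂ) - (t:ℂ) * z) ^ (α - 1) * (-z)) (t:ℂ) := hψ.cpow_const hslit
    have hE : HasDerivAt e
        ((∑' n : ℕ, c n * ((n:ℂ) * ((t:ℂ)*z) ^ (n-1))) * z * ((1:ℂ) - (t:ℂ)*z) ^ α
          + g ((t:ℂ)*z) * (α * ((1:ℂ) - (t:ℂ) * z) ^ (α - 1) * (-z))) (t:ℂ) :=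
      hgc.mul hcp
    have hode := ode_identity α habs
    set Dv : ℂ := ∑' n : ℕ, c n * ((n:ℂ) * ((t:ℂ)*z) ^ (n-1)) with hDv
    set Gv : ℂ := g ((t:ℂ)*z) with hGv
    have hode' : α * Gv = (1 - (t:ℂ)*z) * Dv := hode
    have hval : Dv * z * ((1:ℂ) - (t:ℂ)*z) ^ α
        + Gv * (α * ((1:ℂ) - (t:ℂ) * z) ^ (α - 1) * (-z)) = 0 := by
      have hPw : ((1:ℂ) - (t:ℂ) * z) ^ α
          = ((1:ℂ) - (t:ℂ) * z) ^ (α - 1) * ((1:ℂ) - (t:ℂ) * z) := by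
        have h := Complex.cpow_add (α - 1) 1 hne
        rw [Complex.cpow_one] at h
        rw [show α - 1 + 1 = α by ring] at h
        exact h
      rw [hPw]
      linear_combination (-(z * ((1:ℂ) - (t:ℂ)*z) ^ (α - 1))) * hode'
    rw [hval] at hE
    exact hE.comp_ofReal
  have hcont : ContinuousOn (fun s : ℝ => e s) (Set.Icc 0 1) :=
    fun t ht => ((hF t ht).continuousAt).continuousWithinAt
  have hconst := constant_of_has_deriv_right_zero hcont
    (fun t ht => (hF t (Set.mem_Icc_of_Ico ht)).hasDerivWithinAt)
  have h10 := hconst 1 (Set.mem_Icc.2 ⟨zero_le_one, le_refl 1⟩)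
  -- F 1 = F 0
  have hg0 : g 0 = 1 := by
    have h0 : g 0 = ∑' n : ℕ, c n * (0:ℂ) ^ n := rfl
    rw [h0, tsum_eq_single 0 (fun n hn => by simp [zero_pow hn])]
    simp [hc, poch_zero]
  have hF0 : e ((0:ℝ):ℂ) = 1 := by
    have h0 : e ((0:ℝ):ℂ) = g (((0:ℝ):ℂ) * z) * (1 - ((0:ℝ):ℂ) * z) ^ α := rfl
    rw [h0]
    norm_num [hg0]
  have hF1 : e ((1:ℝ):ℂ) = g z * (1 - z) ^ α := by
    have h0 : e ((1:ℝ):ℂ) = g (((1:ℝ):ℂ) * z) * (1 - ((1:ℝ):ℂ) * z) ^ α := rfl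
    rw [h0]
    norm_num
  rw [hF1, hF0] at h10
  have hzne : (1:ℂ) - z ≠ 0 := by
    intro h
    have : z = 1 := by linear_combination -h
    rw [this] at hz; simp at hz
  have hPne : ((1:ℂ) - z) ^ α ≠ 0 := by
    rw [Ne, Complex.cpow_eq_zero_iff]
    tauto
  rw [Complex.cpow_neg]
  calc g z = (g z * ((1-z)^α)) * ((1-z)^α)⁻¹ := by field_simp
    _ = (((1:ℂ)-z) ^ α)⁻¹ := by rw [h10, one_mul]
lemma pochR_add (q : ℝ) (j k : ℕ) : pochR q (j + k) = pochR q j * pochR (q + j) k := by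
  have h := congrArg (Polynomial.eval q) (ascPochhammer_mul (S := ℝ) j k)
  simpa [pochR, Polynomial.eval_comp] using h.symm

lemma poch_ofReal (A : ℝ) (n : ℕ) : poch (A : ℂ) n = ((pochR A n : ℝ) : ℂ) := by
  induction n with
  | zero => simp [poch_zero, pochR_zero]
  | succ n ih => rw [poch_succ, pochR_succ, ih]; push_cast; ring

lemma hasSum_binomR (A : ℝ) {r : ℝ} (hr0 : 0 ≤ r) (hr : r < 1) :
    HasSum (fun ℓ : ℕ => pochR A ℓ * r ^ ℓ / (ℓ.factorial : ℝ)) ((1 - r) ^ (-A) : ℝ) := by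
  have habs : Complex.abs ((r : ℝ) : ℂ) < 1 := by
    rw [Complex.abs_ofReal, _root_.abs_of_nonneg hr0]; exact hr
  have h := hasSum_binom (A : ℂ) habs
  have h1r : (0:ℝ) ≤ 1 - r := by linarith
  have hcast : (fun ℓ : ℕ => poch (A:ℂ) ℓ * ((r:ℝ):ℂ) ^ ℓ / (ℓ.factorial : ℂ))
      = fun ℓ : ℕ => (((pochR A ℓ * r ^ ℓ / (ℓ.factorial : ℝ)) : ℝ) : ℂ) := by
    funext ℓ
    rw [poch_ofReal]
    push_cast
    ring
  rw [hcast] at h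
  have hval : ((1:ℂ) - ((r:ℝ):ℂ)) ^ (-(A:ℂ)) = (((1 - r) ^ (-A) : ℝ) : ℂ) := by
    rw [show ((1:ℂ) - ((r:ℝ):ℂ)) = (((1 - r : ℝ)):ℂ) by push_cast; ring,
      show (-(A:ℂ)) = ((-A : ℝ) : ℂ) by push_cast; ring]
    exact (Complex.ofReal_cpow h1r (-A)).symm
  rw [hval] at h
  exact Complex.hasSum_ofReal.1 h

lemma fac_mul_fac_le (m n : ℕ) : ((m + n).factorial : ℝ) ≤ 2 ^ (m+n) * m.factorial * n.factorial := by
  have h1 : (m + n).choose n ≤ 2 ^ (m + n) := by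
    calc (m + n).choose n ≤ ∑ i ∈ Finset.range (m + n + 1), (m + n).choose i :=
          Finset.single_le_sum (f := fun i => (m+n).choose i) (fun i _ => Nat.zero_le _)
            (Finset.mem_range.2 (by omega))
      _ = 2 ^ (m + n) := Nat.sum_range_choose (m + n)
  have h2 : (m + n).choose n * m.factorial * n.factorial = (m + n).factorial :=
    Nat.add_choose_mul_factorial_mul_factorial m n
  have h3 : (m + n).factorial ≤ 2 ^ (m + n) * m.factorial * n.factorial := by
    rw [← h2]
    exact Nat.mul_le_mul_right _ (Nat.mul_le_mul_right _ h1)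
  exact_mod_cast h3

set_option maxHeartbeats 1000000 in
theorem stmt15 (a b c x y χ : ℂ) (hb : ∀ n : ℕ, b ≠ -(n : ℂ)) (hc : ∀ n : ℕ, c ≠ -(n : ℂ))
    (hχ : ‖χ‖ < 1) :
    psi2three a b c x y χ = (1 - χ) ^ (-a) * psi2 a b c (x / (1 - χ)) (y / (1 - χ)) := by
  classical
  have hwne : (1:ℂ) - χ ≠ 0 := by
    intro h
    have : χ = 1 := by linear_combination -h
    rw [this] at hχ; simp at hχ
  have hA0 : 0 ≤ Complex.abs a := Complex.abs.nonneg a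
  have hr0 : 0 ≤ Complex.abs χ := Complex.abs.nonneg χ
  have h1r : (0:ℝ) < 1 - Complex.abs χ := sub_pos.2 hχ
  obtain ⟨δb, hδb, hpb⟩ := abs_poch_lower hb
  obtain ⟨δc, hδc, hpc⟩ := abs_poch_lower hc
  set A : ℝ := Complex.abs a with hA
  set r : ℝ := Complex.abs χ with hrdef
  set X : ℝ := Complex.abs x / δb with hXdef
  set Y : ℝ := Complex.abs y / δc with hYdef
  have hX0 : 0 ≤ X := div_nonneg (Complex.abs.nonneg x) hδb.le
  have hY0 : 0 ≤ Y := div_nonneg (Complex.abs.nonneg y) hδc.le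
  set ρ : ℝ := (1 - r)⁻¹ with hρdef
  have hρ0 : 0 < ρ := inv_pos.2 h1r
  set f : ℕ × ℕ × ℕ → ℂ := fun p =>
    poch a (p.1 + p.2.1 + p.2.2) * x ^ p.2.1 * y ^ p.2.2 * χ ^ p.1 /
      ((p.1.factorial : ℂ) * (p.2.1.factorial : ℂ) * (p.2.2.factorial : ℂ) *
        poch b p.2.1 * poch c p.2.2) with hfdef
  set K : ℕ × ℕ → ℝ := fun mn => pochR A (mn.1 + mn.2) * X ^ mn.1 * Y ^ mn.2 /
    ((mn.1.factorial : ℝ) * mn.2.factorial * mn.1.factorial * mn.2.factorial) with hKdef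
  set G : (ℕ × ℕ) × ℕ → ℝ := fun q =>
    K q.1 * (pochR (A + ((q.1.1 + q.1.2 : ℕ) : ℝ)) q.2 * r ^ q.2 / (q.2.factorial : ℝ))
    with hGdef
  have hApn : ∀ s : ℕ, (0:ℝ) ≤ A + (s : ℝ) := fun s => by positivity
  have hKnn : ∀ mn : ℕ × ℕ, 0 ≤ K mn := by
    intro mn
    rw [hKdef]
    apply div_nonneg _ (by positivity)
    exact mul_nonneg (mul_nonneg (pochR_nonneg hA0 _) (pow_nonneg hX0 _)) (pow_nonneg hY0 _)
  have hGnn : ∀ q, 0 ≤ G q := by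
    intro q
    rw [hGdef]
    apply mul_nonneg (hKnn q.1)
    apply div_nonneg _ (by positivity)
    exact mul_nonneg (pochR_nonneg (hApn _) _) (pow_nonneg hr0 _)
  -- the basic norm bound
  have hbound : ∀ ℓ m n : ℕ, ‖f (ℓ, m, n)‖ ≤ G ((m, n), ℓ) := by
    intro ℓ m n
    have hnum : Complex.abs (poch a (ℓ + m + n)) ≤
        pochR A (m + n) * pochR (A + ((m + n : ℕ) : ℝ)) ℓ := by
      rw [show ℓ + m + n = (m + n) + ℓ from by omega]
      have h1 := abs_poch_le a ((m + n) + ℓ)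
      rw [pochR_add] at h1
      exact h1
    have hp1 : 0 ≤ pochR A (m + n) := pochR_nonneg hA0 _
    have hp2 : 0 ≤ pochR (A + ((m + n : ℕ) : ℝ)) ℓ := pochR_nonneg (hApn _) _
    have hdb := hpb m
    have hdc := hpc n
    have hdb0 : (0:ℝ) < δb ^ m * m.factorial := by
      apply mul_pos (pow_pos hδb m) (by positivity)
    have hdc0 : (0:ℝ) < δc ^ n * n.factorial := by
      apply mul_pos (pow_pos hδc n) (by positivity)
    have hpbpos : (0:ℝ) < Complex.abs (poch b m) := lt_of_lt_of_le hdb0 hdb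
    have hpcpos : (0:ℝ) < Complex.abs (poch c n) := lt_of_lt_of_le hdc0 hdc
    have hnorm : ‖f (ℓ, m, n)‖ =
        Complex.abs (poch a (ℓ + m + n)) * Complex.abs x ^ m * Complex.abs y ^ n * r ^ ℓ /
          ((ℓ.factorial : ℝ) * (m.factorial : ℝ) * (n.factorial : ℝ) *
            Complex.abs (poch b m) * Complex.abs (poch c n)) := by
      rw [hfdef]
      simp only [Complex.norm_eq_abs, map_div₀, map_mul, map_pow, Complex.abs_natCast]
      rfl
    rw [hnorm, hGdef, hKdef]
    simp only
    have habsx : (0:ℝ) ≤ Complex.abs x ^ m := pow_nonneg (Complex.abs.nonneg x) m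
    have habsy : (0:ℝ) ≤ Complex.abs y ^ n := pow_nonneg (Complex.abs.nonneg y) n
    have habsr : (0:ℝ) ≤ r ^ ℓ := pow_nonneg hr0 ℓ
    have hN'nn : (0:ℝ) ≤ pochR A (m + n) * pochR (A + ((m + n : ℕ) : ℝ)) ℓ *
        Complex.abs x ^ m * Complex.abs y ^ n * r ^ ℓ :=
      mul_nonneg (mul_nonneg (mul_nonneg (mul_nonneg hp1 hp2) habsx) habsy) habsr
    have hD'pos : (0:ℝ) < (ℓ.factorial : ℝ) * (m.factorial : ℝ) * (n.factorial : ℝ) *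
        (δb ^ m * m.factorial) * (δc ^ n * n.factorial) := by
      apply mul_pos (mul_pos (by positivity) hdb0) hdc0
    have hstep1 : Complex.abs (poch a (ℓ + m + n)) * Complex.abs x ^ m * Complex.abs y ^ n
          * r ^ ℓ /
          ((ℓ.factorial : ℝ) * (m.factorial : ℝ) * (n.factorial : ℝ) *
            Complex.abs (poch b m) * Complex.abs (poch c n)) ≤
        pochR A (m + n) * pochR (A + ((m + n : ℕ) : ℝ)) ℓ * Complex.abs x ^ m *
          Complex.abs y ^ n * r ^ ℓ /
          ((ℓ.factorial : ℝ) * (m.factorial : ℝ) * (n.factorial : ℝ) *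
            (δb ^ m * m.factorial) * (δc ^ n * n.factorial)) := by
      apply div_le_div₀ hN'nn
      · apply mul_le_mul_of_nonneg_right ?_ habsr
        apply mul_le_mul_of_nonneg_right ?_ habsy
        apply mul_le_mul_of_nonneg_right hnum habsx
      · exact hD'pos
      · apply mul_le_mul ?_ hdc hdc0.le ?_
        · apply mul_le_mul_of_nonneg_left hdb (by positivity)
        · exact mul_nonneg (by positivity) hpbpos.le
    apply hstep1.trans_eq
    rw [hXdef, hYdef, div_pow, div_pow]
    have hfb : ((m.factorial : ℝ)) ≠ 0 := by positivity
    have hfc : ((n.factorial : ℝ)) ≠ 0 := by positivity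
    have hfl : ((ℓ.factorial : ℝ)) ≠ 0 := by positivity
    have hb0 : δb ≠ 0 := hδb.ne'
    have hc0 : δc ≠ 0 := hδc.ne'
    have hbm : δb ^ m ≠ 0 := pow_ne_zero m hb0
    have hcn : δc ^ n ≠ 0 := pow_ne_zero n hc0
    field_simp
  -- inner summability and value
  have hinner : ∀ m n : ℕ, HasSum (fun ℓ => f (ℓ, m, n))
      (((1:ℂ) - χ) ^ (-a) * (poch a (m + n) * (x / (1 - χ)) ^ m * (y / (1 - χ)) ^ n /
        ((m.factorial : ℂ) * (n.factorial : ℂ) * poch b m * poch c n))) := by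
    intro m n
    have hfb : ((m.factorial : ℂ)) ≠ 0 := Nat.cast_ne_zero.2 m.factorial_ne_zero
    have hfc : ((n.factorial : ℂ)) ≠ 0 := Nat.cast_ne_zero.2 n.factorial_ne_zero
    have hpbne : poch b m ≠ 0 := poch_ne_zero hb m
    have hpcne : poch c n ≠ 0 := poch_ne_zero hc n
    set C : ℂ := poch a (m + n) * x ^ m * y ^ n /
      ((m.factorial : ℂ) * (n.factorial : ℂ) * poch b m * poch c n) with hCdef
    have hbs := (hasSum_binom (a + ((m + n : ℕ) : ℂ)) hχ).mul_left C
    have hfe : (fun ℓ : ℕ => C * (poch (a + ((m + n : ℕ) : ℂ)) ℓ * χ ^ ℓ / (ℓ.factorial : ℂ)))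
        = fun ℓ : ℕ => f (ℓ, m, n) := by
      funext ℓ
      rw [hfdef]
      simp only
      rw [show ℓ + m + n = (m + n) + ℓ from by omega, poch_add, hCdef]
      have hfl : ((ℓ.factorial : ℂ)) ≠ 0 := Nat.cast_ne_zero.2 ℓ.factorial_ne_zero
      field_simp
    rw [hfe] at hbs
    have hval : C * (((1:ℂ) - χ) ^ (-(a + ((m + n : ℕ) : ℂ)))) =
        ((1:ℂ) - χ) ^ (-a) * (poch a (m + n) * (x / (1 - χ)) ^ m * (y / (1 - χ)) ^ n /
          ((m.factorial : ℂ) * (n.factorial : ℂ) * poch b m * poch c n)) := by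
      have e1 : ((1:ℂ) - χ) ^ (-(m:ℂ)) = (((1:ℂ) - χ) ^ m)⁻¹ := by
        rw [Complex.cpow_neg, Complex.cpow_natCast]
      have e2 : ((1:ℂ) - χ) ^ (-(n:ℂ)) = (((1:ℂ) - χ) ^ n)⁻¹ := by
        rw [Complex.cpow_neg, Complex.cpow_natCast]
      have hsplit : ((1:ℂ) - χ) ^ (-(a + ((m + n : ℕ) : ℂ))) =
          ((1:ℂ) - χ) ^ (-a) * (((1:ℂ) - χ) ^ m)⁻¹ * (((1:ℂ) - χ) ^ n)⁻¹ := by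
        rw [show -(a + ((m + n : ℕ) : ℂ)) = -a + -(m:ℂ) + -(n:ℂ) by push_cast; ring]
        rw [Complex.cpow_add _ _ hwne, Complex.cpow_add _ _ hwne, e1, e2]
      rw [hsplit, hCdef, div_pow, div_pow]
      have hwm : ((1:ℂ) - χ) ^ m ≠ 0 := pow_ne_zero m hwne
      have hwn : ((1:ℂ) - χ) ^ n ≠ 0 := pow_ne_zero n hwne
      field_simp
    rwa [hval] at hbs
  -- summability of G
  have hsumG : Summable G := by
    apply (summable_prod_of_nonneg hGnn).2
    constructor
    · intro mn
      have h1 := (summable_pochR (A + ((mn.1 + mn.2 : ℕ) : ℝ)) (hApn _) hr0 hχ 0).mul_left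
        (K mn)
      simp only [Nat.add_zero] at h1
      exact h1
    · have hval : ∀ mn : ℕ × ℕ, ∑' ℓ, G (mn, ℓ) =
          K mn * ((1 - r) ^ (-(A + ((mn.1 + mn.2 : ℕ) : ℝ))) : ℝ) := by
        intro mn
        rw [hGdef]
        simp only
        rw [tsum_mul_left, (hasSum_binomR (A + ((mn.1 + mn.2 : ℕ) : ℝ)) hr0 hχ).tsum_eq]
      set P : ℝ := 2 * (A + 1) * ρ * X with hPdef
      set Q : ℝ := 2 * (A + 1) * ρ * Y with hQdef
      have hA1 : (0:ℝ) ≤ 2 * (A + 1) := by linarith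
      have hP0 : 0 ≤ P := by
        rw [hPdef]; exact mul_nonneg (mul_nonneg hA1 hρ0.le) hX0
      have hQ0 : 0 ≤ Q := by
        rw [hQdef]; exact mul_nonneg (mul_nonneg hA1 hρ0.le) hY0
      apply Summable.of_nonneg_of_le
        (fun mn => by rw [hval mn]; exact mul_nonneg (hKnn mn) (Real.rpow_nonneg h1r.le _))
        (fun mn => ?_)
        ((((Real.summable_pow_div_factorial P).mul_of_nonneg
          (Real.summable_pow_div_factorial Q)
          (fun k => div_nonneg (pow_nonneg hP0 k) (by positivity))
          (fun k => div_nonneg (pow_nonneg hQ0 k) (by positivity))).mul_left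
            ((1 - r) ^ (-A) : ℝ)))
      rw [hval mn]
      obtain ⟨m, n⟩ := mn
      simp only
      have hrs : ((1 - r) ^ (-(A + ((m + n : ℕ) : ℝ))) : ℝ) =
          ((1 - r) ^ (-A) : ℝ) * ρ ^ (m + n) := by
        rw [show -(A + ((m + n : ℕ) : ℝ)) = -A + -((m + n : ℕ) : ℝ) by ring,
          Real.rpow_add h1r, Real.rpow_neg h1r.le (((m + n : ℕ) : ℝ)), Real.rpow_natCast, hρdef, inv_pow]
      rw [hrs]
      have hfb : ((m.factorial : ℝ)) ≠ 0 := by positivity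
      have hfc : ((n.factorial : ℝ)) ≠ 0 := by positivity
      have hKle : K (m, n) ≤ (A + 1) ^ (m + n) * 2 ^ (m + n) * (X ^ m * Y ^ n) /
          ((m.factorial : ℝ) * n.factorial) := by
        rw [hKdef]
        simp only
        have hnum2 : pochR A (m + n) * X ^ m * Y ^ n ≤
            ((A + 1) ^ (m + n) * (2 ^ (m + n) * m.factorial * n.factorial)) * X ^ m * Y ^ n := by
          apply mul_le_mul_of_nonneg_right ?_ (pow_nonneg hY0 n)
          apply mul_le_mul_of_nonneg_right ?_ (pow_nonneg hX0 m)
          calc pochR A (m + n) ≤ (A + 1) ^ (m + n) * ((m + n).factorial : ℝ) :=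
              pochR_le hA0 (m + n)
            _ ≤ (A + 1) ^ (m + n) * (2 ^ (m + n) * m.factorial * n.factorial) :=
              mul_le_mul_of_nonneg_left (fac_mul_fac_le m n) (pow_nonneg (by linarith) _)
        have hN2nn : (0:ℝ) ≤
            ((A + 1) ^ (m + n) * (2 ^ (m + n) * m.factorial * n.factorial)) * X ^ m * Y ^ n := by
          have hA1' : (0:ℝ) ≤ (A + 1) ^ (m + n) := pow_nonneg (by linarith) _
          exact mul_nonneg (mul_nonneg (mul_nonneg hA1' (by positivity)) (pow_nonneg hX0 m))
            (pow_nonneg hY0 n)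
        calc pochR A (m + n) * X ^ m * Y ^ n /
              ((m.factorial : ℝ) * n.factorial * m.factorial * n.factorial)
            ≤ ((A + 1) ^ (m + n) * (2 ^ (m + n) * m.factorial * n.factorial)) * X ^ m * Y ^ n /
              ((m.factorial : ℝ) * n.factorial * m.factorial * n.factorial) :=
              div_le_div₀ hN2nn hnum2 (by positivity) le_rfl
          _ = (A + 1) ^ (m + n) * 2 ^ (m + n) * (X ^ m * Y ^ n) /
              ((m.factorial : ℝ) * n.factorial) := by
              field_simp
      calc K (m, n) * (((1 - r) ^ (-A) : ℝ) * ρ ^ (m + n))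
          ≤ ((A + 1) ^ (m + n) * 2 ^ (m + n) * (X ^ m * Y ^ n) /
              ((m.factorial : ℝ) * n.factorial)) * (((1 - r) ^ (-A) : ℝ) * ρ ^ (m + n)) := by
            apply mul_le_mul_of_nonneg_right hKle
            exact mul_nonneg (Real.rpow_nonneg h1r.le _) (pow_nonneg hρ0.le _)
        _ = ((1 - r) ^ (-A) : ℝ) * (P ^ m / m.factorial * (Q ^ n / n.factorial)) := by
            rw [hPdef, hQdef]
            rw [show (2 * (A + 1) * ρ * X) ^ m = 2 ^ m * (A + 1) ^ m * ρ ^ m * X ^ m by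
                rw [mul_pow, mul_pow, mul_pow],
              show (2 * (A + 1) * ρ * Y) ^ n = 2 ^ n * (A + 1) ^ n * ρ ^ n * Y ^ n by
                rw [mul_pow, mul_pow, mul_pow],
              pow_add, pow_add, pow_add]
            field_simp
  -- summability of f (reordered)
  have hsumf' : Summable (fun q : (ℕ × ℕ) × ℕ => f (q.2, q.1)) := by
    apply Summable.of_norm
    apply Summable.of_nonneg_of_le (fun q => norm_nonneg _) ?_ hsumG
    intro ⟨⟨m, n⟩, ℓ⟩
    exact hbound ℓ m n
  -- main computation
  have hmain : psi2three a b c x y χ = ∑' p : ℕ × ℕ × ℕ, f p := rfl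
  rw [hmain]
  rw [← (Equiv.prodComm (ℕ × ℕ) ℕ).tsum_eq f]
  have hswap : (fun q : (ℕ × ℕ) × ℕ => f ((Equiv.prodComm (ℕ × ℕ) ℕ) q))
      = fun q : (ℕ × ℕ) × ℕ => f (q.2, q.1) := rfl
  rw [hswap]
  rw [Summable.tsum_prod' hsumf' (fun mn => (hinner mn.1 mn.2).summable)]
  have hinval : ∀ mn : ℕ × ℕ, ∑' ℓ, f (ℓ, mn) =
      ((1:ℂ) - χ) ^ (-a) * (poch a (mn.1 + mn.2) * (x / (1 - χ)) ^ mn.1 *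
        (y / (1 - χ)) ^ mn.2 /
        ((mn.1.factorial : ℂ) * (mn.2.factorial : ℂ) * poch b mn.1 * poch c mn.2)) :=
    fun mn => (hinner mn.1 mn.2).tsum_eq
  rw [tsum_congr hinval, tsum_mul_left]
  rfl
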